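/- Let π be a permutation of {1,…,n} and k ∈ {1,…,n}. Then the pair (c_k, d_k) = ((k,0),(0,k)) belongs to β_π if and only if k is the largest element of the segment of π containing k. -/

import Mathlib

/-- The square grid `G_n`: the direct product of two `(n+1)`-element chains. -/
abbrev Grid (n : ℕ) := Fin (n + 1) × Fin (n + 1)

/-- `θ` is a join-congruence: an equivalence relation compatible with `⊔`. -/
def IsJoinCong {S : Type*} [SemilatticeSup S] (θ : S → S → Prop) : Prop :=
  Equivalence θ ∧ ∀ a b c : S, θ a b → θ (a ⊔ c) (b ⊔ c)

/-- The smallest join-congruence containing the relation `R`. -/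
def joinCongGen {S : Type*} [SemilatticeSup S] (R : S → S → Prop) : S → S → Prop :=
  fun a b => ∀ θ : S → S → Prop, IsJoinCong θ → (∀ x y, R x y → θ x y) → θ a b

theorem joinCongGen_equivalence {S : Type*} [SemilatticeSup S] (R : S → S → Prop) :
    Equivalence (joinCongGen R) where
  refl a := fun _θ hθ _ => hθ.1.refl a
  symm h := fun θ hθ hR => hθ.1.symm (h θ hθ hR)
  trans h₁ h₂ := fun θ hθ hR => hθ.1.trans (h₁ θ hθ hR) (h₂ θ hθ hR)

/-- The generating pairs of `β_π`. -/
def betaGen {n : ℕ} (π : Equiv.Perm (Fin n)) : Grid n → Grid n → Prop :=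
  fun a b => ∃ i : Fin n,
    (a = (i.castSucc, (π i).succ) ∧ b = (i.succ, (π i).succ)) ∨
    (a = (i.succ, (π i).castSucc) ∧ b = (i.succ, (π i).succ))

/-- `β_π`, the smallest join-congruence on the grid containing `betaGen π`. -/
def beta {n : ℕ} (π : Equiv.Perm (Fin n)) : Grid n → Grid n → Prop :=
  joinCongGen (betaGen π)

/-- The setoid on the grid determined by `β_π`. -/
def betaSetoid {n : ℕ} (π : Equiv.Perm (Fin n)) : Setoid (Grid n) :=
  ⟨beta π, joinCongGen_equivalence _⟩

/-- The quotient `G_n/β_π`. -/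
def QuotGrid {n : ℕ} (π : Equiv.Perm (Fin n)) := Quotient (betaSetoid π)

/-- The order on `G_n/β_π`: `[a] ≤ [b]` iff `(a ⊔ b, b) ∈ β_π`. -/
instance QuotGrid.instLE {n : ℕ} (π : Equiv.Perm (Fin n)) : LE (QuotGrid π) :=
  ⟨fun x y => ∃ a b : Grid n,
    x = Quotient.mk (betaSetoid π) a ∧ y = Quotient.mk (betaSetoid π) b ∧ beta π (a ⊔ b) b⟩

/-- `I` is closed with respect to `σ`: `σ i ∈ I` for all `i ∈ I`. -/
def PermClosed {n : ℕ} (σ : Equiv.Perm (Fin n)) (I : Set (Fin n)) : Prop :=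
  ∀ i ∈ I, σ i ∈ I

/-- `I` is a section of `σ`: a nonempty interval `{u,…,v}` such that `I`, `{x | x < u}`
and `{x | v < x}` are all closed with respect to `σ`. -/
def IsSection {n : ℕ} (σ : Equiv.Perm (Fin n)) (I : Set (Fin n)) : Prop :=
  ∃ u v : Fin n, u ≤ v ∧ I = Set.Icc u v ∧
    PermClosed σ I ∧ PermClosed σ {x | x < u} ∧ PermClosed σ {x | v < x}

/-- `I` is a segment of `σ`: a section minimal with respect to inclusion. -/
def IsSegment {n : ℕ} (σ : Equiv.Perm (Fin n)) (I : Set (Fin n)) : Prop :=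
  IsSection σ I ∧ ∀ J : Set (Fin n), IsSection σ J → J ⊆ I → J = I

/-- `Seg σ`, the set of all segments of `σ`. -/
def Seg {n : ℕ} (σ : Equiv.Perm (Fin n)) : Set (Set (Fin n)) :=
  {I | IsSegment σ I}

/-- `σ` and `μ` are sectionally inverted or equal: they have the same segments and on
each segment `μ` coincides with `σ` or with `σ⁻¹`. -/
def Rho {n : ℕ} (σ μ : Equiv.Perm (Fin n)) : Prop :=
  Seg σ = Seg μ ∧ ∀ I ∈ Seg σ, (∀ i ∈ I, μ i = σ i) ∨ (∀ i ∈ I, μ i = σ⁻¹ i)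

/-! The pair `(c_k, d_k)` lies in `β_π` exactly when `{1,…,k}` is closed under `π`, and this in
turn says that `k` ends a segment.

If `{1,…,k}` is closed, the generators of `β_π`, joined with suitable grid points, give unit
steps along column `k` from `c_k` to `(k,k)` and along row `k` from `d_k` to `(k,k)`.
Conversely, if `x ≤ k < π x`, then "lying below `(x-1, π x - 1)`" is respected by every
generator and by joins, hence by `β_π`; it holds for `d_k` but not for `c_k`.

A closed initial segment `{1,…,k}` is cut into the segment ending at `k` by the largest
`u ≤ k` with `{1,…,u-1}` closed. -/

section PermClosed

variable {n : ℕ} {σ : Equiv.Perm (Fin n)} {I : Set (Fin n)}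

theorem PermClosed.bijOn (h : PermClosed σ I) : Set.BijOn σ I I :=
  (I.toFinite.injOn_iff_bijOn_of_mapsTo h).1 σ.injective.injOn

theorem PermClosed.compl (h : PermClosed σ I) : PermClosed σ Iᶜ :=
  (h.bijOn.compl σ.bijective).mapsTo

theorem PermClosed.symm (h : PermClosed σ I) : PermClosed σ.symm I :=
  (Equiv.bijOn_symm.2 h.bijOn).mapsTo

theorem PermClosed.Iic_of_Ioi {v : Fin n} (h : PermClosed σ (Set.Ioi v)) :
    PermClosed σ (Set.Iic v) :=
  Set.compl_Ioi (a := v) ▸ h.compl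

theorem isSection_Icc {u k : Fin n} (huk : u ≤ k) (hu : PermClosed σ (Set.Iio u))
    (hk : PermClosed σ (Set.Iic k)) : IsSection σ (Set.Icc u k) := by
  refine ⟨u, k, huk, rfl, ?_, hu, show PermClosed σ (Set.Ioi k) from Set.compl_Iic (a := k) ▸ hk.compl⟩
  rw [← Set.Ici_inter_Iic, ← Set.compl_Iio]
  exact Set.MapsTo.inter_inter hu.compl hk

theorem isSegment_Icc_of_isGreatest {u k : Fin n} (hk : PermClosed σ (Set.Iic k))
    (hu : IsGreatest {u | u ≤ k ∧ PermClosed σ (Set.Iio u)} u) :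
    IsSegment σ (Set.Icc u k) := by
  refine ⟨isSection_Icc hu.1.1 hu.1.2 hk, ?_⟩
  rintro _ ⟨a, b, hab, rfl, -, ha, hb⟩ hJ
  have hua : u ≤ a := (hJ ⟨le_rfl, hab⟩).1
  have hbk : b ≤ k := (hJ ⟨hab, le_rfl⟩).2
  have hau : a = u := le_antisymm (hu.2 ⟨hab.trans hbk, ha⟩) hua
  obtain rfl | hbk := hbk.eq_or_lt
  · rw [hau]
  -- otherwise `b + 1 ≤ k` would be a larger admissible cut than `u`
  have hb_max : ¬IsMax b := hbk.not_isMax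
  have hsucc : Order.succ b ≤ u :=
    hu.2 ⟨Order.succ_le_of_lt hbk, Order.Iio_succ_of_not_isMax hb_max ▸ hb.Iic_of_Ioi⟩
  exact absurd (hsucc.trans (hua.trans hab)) (Order.lt_succ_of_not_isMax hb_max).not_ge

theorem exists_isSegment_le_iff_permClosed_Iic (k : Fin n) :
    (∃ I : Set (Fin n), IsSegment σ I ∧ k ∈ I ∧ ∀ j ∈ I, j ≤ k) ↔
      PermClosed σ (Set.Iic k) := by
  constructor
  · rintro ⟨_, ⟨⟨u, v, huv, rfl, -, -, hv⟩, -⟩, hk, hmax⟩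
    obtain rfl : v = k := le_antisymm (hmax v ⟨huv, le_rfl⟩) hk.2
    exact hv.Iic_of_Ioi
  · intro hk
    have hbot : (⟨0, k.pos⟩ : Fin n) ∈ {u | u ≤ k ∧ PermClosed σ (Set.Iio u)} :=
      ⟨Nat.zero_le k.val, fun x hx => absurd hx (Nat.not_lt_zero x.val)⟩
    obtain ⟨u, hu, humax⟩ := Set.exists_max_image _ id (Set.toFinite _) ⟨_, hbot⟩
    exact ⟨_, isSegment_Icc_of_isGreatest hk ⟨hu, humax⟩, ⟨hu.1, le_rfl⟩, fun _ hj => hj.2⟩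

end PermClosed

theorem joinCongGen_isJoinCong {S : Type*} [SemilatticeSup S] (R : S → S → Prop) :
    IsJoinCong (joinCongGen R) :=
  ⟨joinCongGen_equivalence R, fun a b c h θ hθ hR => hθ.2 a b c (h θ hθ hR)⟩

theorem isJoinCong_le_iff_le {S : Type*} [SemilatticeSup S] (t : S) :
    IsJoinCong (fun a b : S => (a ≤ t ↔ b ≤ t)) :=
  ⟨⟨fun _ => Iff.rfl, Iff.symm, Iff.trans⟩, fun a b c h => by simp only [sup_le_iff, h]⟩

theorem Equivalence.fin_chain {α : Type*} {r : α → α → Prop} (hr : Equivalence r) {n : ℕ}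
    (f : Fin (n + 1) → α) (m : Fin (n + 1))
    (h : ∀ i : Fin n, i.succ ≤ m → r (f i.castSucc) (f i.succ)) : r (f 0) (f m) := by
  induction m using Fin.induction with
  | zero => exact hr.refl _
  | succ i ih =>
    exact hr.trans (ih fun j hj => h j (hj.trans (Fin.castSucc_le_succ i))) (h i le_rfl)

section Beta

variable {n : ℕ} (π : Equiv.Perm (Fin n))

theorem beta_equivalence : Equivalence (beta π) := joinCongGen_equivalence _

theorem beta_sup {a b : Grid n} (c : Grid n) (h : beta π a b) : beta π (a ⊔ c) (b ⊔ c) :=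
  (joinCongGen_isJoinCong _).2 a b c h

theorem beta_of_betaGen {a b : Grid n} (h : betaGen π a b) : beta π a b :=
  fun _ _ hR => hR a b h

theorem beta_horizontal_step (i : Fin n) {c : Fin (n + 1)} (h : (π i).succ ≤ c) :
    beta π (i.castSucc, c) (i.succ, c) := by
  have := beta_sup π (i.castSucc, c) (beta_of_betaGen π ⟨i, .inl ⟨rfl, rfl⟩⟩)
  simpa [sup_of_le_right h, Fin.castSucc_le_succ i] using this

theorem beta_vertical_step (i : Fin n) {r : Fin (n + 1)} (h : i.succ ≤ r) :
    beta π (r, (π i).castSucc) (r, (π i).succ) := by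
  have := beta_sup π (r, (π i).castSucc) (beta_of_betaGen π ⟨i, .inr ⟨rfl, rfl⟩⟩)
  simpa [sup_of_le_right h, Fin.castSucc_le_succ (π i)] using this

theorem beta_of_permClosed_Iic {k : Fin n} (hk : PermClosed π (Set.Iic k)) :
    beta π (k.succ, 0) (0, k.succ) := by
  have hcol : beta π (k.succ, 0) (k.succ, k.succ) :=
    (beta_equivalence π).fin_chain (fun j => (k.succ, j)) k.succ fun j hj => by
      simpa using beta_vertical_step π (π.symm j)
        (Fin.succ_le_succ_iff.2 (hk.symm j (Fin.succ_le_succ_iff.1 hj)))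
  have hrow : beta π (0, k.succ) (k.succ, k.succ) :=
    (beta_equivalence π).fin_chain (fun i => (i, k.succ)) k.succ fun i hi =>
      beta_horizontal_step π i (Fin.succ_le_succ_iff.2 (hk i (Fin.succ_le_succ_iff.1 hi)))
  exact (beta_equivalence π).trans hcol ((beta_equivalence π).symm hrow)

theorem le_iff_le_of_beta (x : Fin n) {a b : Grid n} (h : beta π a b) :
    a ≤ (x.castSucc, (π x).castSucc) ↔ b ≤ (x.castSucc, (π x).castSucc) := by
  refine h _ (isJoinCong_le_iff_le _) ?_
  rintro _ _ ⟨i, ⟨rfl, rfl⟩ | ⟨rfl, rfl⟩⟩ <;>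
    simp only [Prod.mk_le_mk, Fin.castSucc_le_castSucc_iff, Fin.succ_le_castSucc_iff]
  -- a generator at `i` leaves the down-set of `(x-1, π x - 1)` only if `i = x`
  · exact and_congr_left fun hπ => ⟨fun hi => hi.lt_of_ne (hπ.ne ∘ congrArg π), le_of_lt⟩
  · exact and_congr_right fun hi => ⟨fun hπ => hπ.lt_of_ne fun he => hi.ne (π.injective he), le_of_lt⟩

theorem permClosed_Iic_of_beta {k : Fin n} (h : beta π (k.succ, 0) (0, k.succ)) :
    PermClosed π (Set.Iic k) := by
  intro x hx
  by_contra hπx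
  have := (le_iff_le_of_beta π x h).2
    ⟨Fin.zero_le _, Fin.succ_le_castSucc_iff.2 (lt_of_not_ge hπx)⟩
  exact absurd (Fin.succ_le_castSucc_iff.1 this.1) (not_lt.2 hx)

end Beta

/-- Here `k : Fin n` stands for the element `k+1` of `{1,…,n}`, with grid coordinate
`k.succ`. -/
theorem beta_ck_dk_iff_largest_in_segment {n : ℕ} (π : Equiv.Perm (Fin n)) (k : Fin n) :
    beta π (k.succ, (0 : Fin (n + 1))) ((0 : Fin (n + 1)), k.succ) ↔
      ∃ I : Set (Fin n), IsSegment π I ∧ k ∈ I ∧ ∀ j ∈ I, j ≤ k := by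
  rw [exists_isSegment_le_iff_permClosed_Iic]
  exact ⟨permClosed_Iic_of_beta π, beta_of_permClosed_Iic π⟩
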